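/- arXiv:0809.2021 — 2 statements merged into one kernel-verified Lean document; each statement's English description precedes it below -/
import Mathlib

section
/- Let K be a field, R = K[[t^2, t^3]], fix an integer i ≥ 2, a nonempty subset S ⊆ K, and a subset T ⊆ K. Define the map c on the ideals of R by: c(P_{n,a}) = M_n whenever n ≥ i+2, or n = i and a ∈ S, or n = i+1 and a ∈ T; and c(I) = I for every other ideal I (in particular c(M_n) = M_n for all n ≥ 2, c(P_{n,a}) = P_{n,a} when n < i, when n = i and a ∉ S, and when n = i+1 and a ∉ T, c(0) = 0, and c(R) = R). Then c is a semiprime operation on R. -/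
open PowerSeries

/-- A closure operation on the set of ideals of a commutative ring. -/
def IsClosureOperation {R : Type*} [CommRing R] (c : Ideal R → Ideal R) : Prop :=
  (∀ I : Ideal R, I ≤ c I) ∧ (∀ I J : Ideal R, I ≤ J → c I ≤ c J) ∧
    (∀ I : Ideal R, c (c I) = c I)

/-- A semiprime operation: a closure operation satisfying `c I * c J ≤ c (I * J)`. -/
def IsSemiprimeOperation {R : Type*} [CommRing R] (c : Ideal R → Ideal R) : Prop :=
  IsClosureOperation c ∧ ∀ I J : Ideal R, c I * c J ≤ c (I * J)

/-- A prime operation: a semiprime operation satisfying `c (bI) = b c I` for every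
non-zerodivisor `b`. -/
def IsPrimeOperation {R : Type*} [CommRing R] (c : Ideal R → Ideal R) : Prop :=
  IsSemiprimeOperation c ∧
    ∀ b : R, b ∈ nonZeroDivisors R → ∀ I : Ideal R,
      c (Ideal.span {b} * I) = Ideal.span {b} * c I

/-- A (semiprime) operation is bounded if there is a nonzero proper ideal `J`
such that `c I = J` for every nonzero ideal `I ⊆ J`. -/
def IsBoundedOperation {R : Type*} [CommRing R] (c : Ideal R → Ideal R) : Prop :=
  ∃ J : Ideal R, J ≠ ⊥ ∧ J ≠ ⊤ ∧ ∀ I : Ideal R, I ≠ ⊥ → I ≤ J → c I = J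

/-- The ring `K[[t^2, t^3]]`: power series over `K` with vanishing linear coefficient. -/
def cuspRing (K : Type*) [Field K] : Subring (PowerSeries K) where
  carrier := {f | PowerSeries.coeff 1 f = 0}
  zero_mem' := by simp
  one_mem' := by simp
  add_mem' := by
    intro a b ha hb
    simp only [Set.mem_setOf_eq, map_add] at *
    rw [ha, hb, add_zero]
  neg_mem' := by
    intro a ha
    simp only [Set.mem_setOf_eq, map_neg] at *
    rw [ha, neg_zero]
  mul_mem' := by
    intro a b ha hb
    simp only [Set.mem_setOf_eq] at *
    rw [PowerSeries.coeff_mul]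
    rw [Finset.Nat.sum_antidiagonal_eq_sum_range_succ_mk]
    simp [Finset.sum_range_succ, ha, hb]

/-- The principal ideal `P_{n,a} = (t^n + a t^{n+1})` of `K[[t^2,t^3]]`. -/
noncomputable def Pgen (K : Type*) [Field K] (n : ℕ) (a : K) : Ideal (cuspRing K) :=
  Ideal.span {x : cuspRing K |
    (x : PowerSeries K) = X ^ n + PowerSeries.C a * X ^ (n + 1)}

/-- The two-generated ideal `M_n = (t^n, t^{n+1})` of `K[[t^2,t^3]]`. -/
noncomputable def Mgen (K : Type*) [Field K] (n : ℕ) : Ideal (cuspRing K) :=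
  Ideal.span {x : cuspRing K |
    (x : PowerSeries K) = X ^ n ∨ (x : PowerSeries K) = X ^ (n + 1)}

/-!
Writing the elements of `M_n` as `t^n u`, membership in `P_{n,a}` is the linear condition
`u₁ = a u₀` on the first two coefficients of `u`. An ideal whose elements have least order
`n ≥ 2` contains `M_{n+2}`, so it is determined by a subspace of `M_n / M_{n+2} ≅ K²`. Hence every
ideal is `0`, `R`, some `M_n` or some `P_{n,a}`, and an ideal strictly containing `P_{n,a}`
contains `M_n`, which gives monotonicity. Since `P_{n,a} P_{m,b} = P_{n+m,a+b}` and
`P_{n,a} M_m = M_{n+m}`, the inequality `c I * c J ≤ c (I * J)` reduces to `M_n M_m ⊆ M_{n+m}`.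
-/

section

variable {K : Type*} [Field K]

namespace PowerSeries

theorem coeff_one_mul_inv_eq_zero {φ ψ : K⟦X⟧} (hψ : constantCoeff ψ ≠ 0)
    (h : coeff 1 φ * constantCoeff ψ = coeff 1 ψ * constantCoeff φ) :
    coeff 1 (φ * ψ⁻¹) = 0 := by
  have hφ : φ = φ * ψ⁻¹ * ψ := by
    rw [mul_assoc, PowerSeries.inv_mul_cancel _ hψ, mul_one]
  have h0 : constantCoeff φ = constantCoeff (φ * ψ⁻¹) * constantCoeff ψ := by
    conv_lhs => rw [hφ]
    rw [map_mul]
  have h1 : coeff 1 φ = coeff 1 (φ * ψ⁻¹) * constantCoeff ψ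
      + coeff 1 ψ * constantCoeff (φ * ψ⁻¹) := by
    conv_lhs => rw [hφ]
    rw [coeff_one_mul]
  rw [h0, h1] at h
  have : coeff 1 (φ * ψ⁻¹) * constantCoeff ψ * constantCoeff ψ = 0 := by linear_combination h
  simpa [hψ] using this

theorem le_of_X_pow_dvd_X_pow_mul {R : Type*} [Semiring R] {m n : ℕ} {u : R⟦X⟧}
    (h : X ^ m ∣ X ^ n * u) (hu : constantCoeff u ≠ 0) : m ≤ n := by
  by_contra! hnm
  exact hu (by simpa [coeff_X_pow_mul'] using X_pow_dvd_iff.mp h n hnm)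

end PowerSeries

namespace cuspRing

theorem mem_iff {f : K⟦X⟧} : f ∈ cuspRing K ↔ coeff 1 f = 0 := Iff.rfl

theorem X_pow_mul_mem {n : ℕ} (hn : 2 ≤ n) (u : K⟦X⟧) : X ^ n * u ∈ cuspRing K := by
  rw [mem_iff, coeff_X_pow_mul', if_neg (by omega)]

theorem X_pow_mem {n : ℕ} (hn : 2 ≤ n) : (X ^ n : K⟦X⟧) ∈ cuspRing K := by
  simpa using X_pow_mul_mem hn (1 : K⟦X⟧)

theorem inv_mem {u : K⟦X⟧} (hu : u ∈ cuspRing K) (h0 : constantCoeff u ≠ 0) :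
    u⁻¹ ∈ cuspRing K := by
  simpa [mem_iff] using coeff_one_mul_inv_eq_zero (φ := 1) h0 (by simp [mem_iff.mp hu])

noncomputable def C : K →+* cuspRing K :=
  PowerSeries.C.codRestrict (cuspRing K) fun a => by simp [mem_iff]

@[simp]
theorem coe_C (a : K) : (C a : K⟦X⟧) = PowerSeries.C a := rfl

theorem eq_top_of_mem {J : Ideal (cuspRing K)} {x : cuspRing K} (hx : x ∈ J)
    (h0 : constantCoeff (x : K⟦X⟧) ≠ 0) : J = ⊤ := by
  refine Ideal.eq_top_of_isUnit_mem J hx (.of_mul_eq_one ⟨_, inv_mem x.2 h0⟩ ?_)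
  exact Subtype.ext (PowerSeries.mul_inv_cancel _ h0)

end cuspRing

noncomputable def Pgen.gen {n : ℕ} (hn : 2 ≤ n) (a : K) : cuspRing K :=
  ⟨X ^ n * (1 + PowerSeries.C a * X), cuspRing.X_pow_mul_mem hn _⟩

theorem Pgen.coe_gen {n : ℕ} (hn : 2 ≤ n) (a : K) :
    (Pgen.gen hn a : K⟦X⟧) = X ^ n * (1 + PowerSeries.C a * X) := rfl

theorem Pgen_eq_span_gen {n : ℕ} (hn : 2 ≤ n) (a : K) :
    Pgen K n a = Ideal.span {Pgen.gen hn a} := by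
  unfold Pgen
  congr 1
  ext x
  rw [Set.mem_singleton_iff, Subtype.ext_iff, Pgen.gen, Set.mem_ofPred_eq]
  ring_nf

theorem Pgen.gen_mem {n : ℕ} (hn : 2 ≤ n) (a : K) : Pgen.gen hn a ∈ Pgen K n a := by
  rw [Pgen_eq_span_gen hn]
  exact Ideal.mem_span_singleton_self _

theorem mem_Pgen_iff {n : ℕ} (hn : 2 ≤ n) {a : K} {x : cuspRing K} :
    x ∈ Pgen K n a ↔
      ∃ u, (x : K⟦X⟧) = X ^ n * u ∧ coeff 1 u = a * constantCoeff u := by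
  have h0 : constantCoeff (1 + PowerSeries.C a * X) = 1 := by simp
  have h1 : coeff 1 (1 + PowerSeries.C a * X) = a := by simp [coeff_one]
  rw [Pgen_eq_span_gen hn, Ideal.mem_span_singleton']
  constructor
  · rintro ⟨r, rfl⟩
    refine ⟨(r : K⟦X⟧) * (1 + PowerSeries.C a * X), by push_cast [Pgen.coe_gen]; ring, ?_⟩
    rw [coeff_one_mul, map_mul, h0, h1, cuspRing.mem_iff.mp r.2]
    ring
  · rintro ⟨u, hxu, hu⟩
    have hne : constantCoeff (1 + PowerSeries.C a * X) ≠ 0 := by simp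
    refine ⟨⟨u * (1 + PowerSeries.C a * X)⁻¹, coeff_one_mul_inv_eq_zero hne ?_⟩, ?_⟩
    · rw [h0, h1, hu]; ring
    · apply Subtype.ext
      push_cast [Pgen.coe_gen]
      rw [hxu, mul_assoc, mul_left_comm _ (X ^ n), PowerSeries.inv_mul_cancel _ hne, mul_one,
        mul_comm]

theorem X_pow_dvd_of_mem_Mgen {n : ℕ} {x : cuspRing K} (hx : x ∈ Mgen K n) :
    X ^ n ∣ (x : K⟦X⟧) := by
  induction hx using Submodule.span_induction with
  | mem y hy =>
    rcases hy with hy | hy <;> rw [hy]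
    exact pow_dvd_pow X n.le_succ
  | zero => simp
  | add y z _ _ hy hz => push_cast; exact dvd_add hy hz
  | smul r y _ hy => rw [smul_eq_mul]; push_cast; exact hy.mul_left _

theorem mem_Mgen_iff {n : ℕ} (hn : 2 ≤ n) {x : cuspRing K} :
    x ∈ Mgen K n ↔ X ^ n ∣ (x : K⟦X⟧) := by
  refine ⟨X_pow_dvd_of_mem_Mgen, fun ⟨u, hxu⟩ => ?_⟩
  have hX : (⟨X ^ n, cuspRing.X_pow_mem hn⟩ : cuspRing K) ∈ Mgen K n :=
    Ideal.subset_span (Or.inl rfl)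
  have hX' : (⟨X ^ (n + 1), cuspRing.X_pow_mem (by omega)⟩ : cuspRing K) ∈ Mgen K n :=
    Ideal.subset_span (Or.inr rfl)
  have hr : u - PowerSeries.C (coeff 1 u) * X ∈ cuspRing K := by simp [cuspRing.mem_iff]
  have : x = ⟨_, hr⟩ * ⟨X ^ n, cuspRing.X_pow_mem hn⟩
      + cuspRing.C (coeff 1 u) * ⟨X ^ (n + 1), cuspRing.X_pow_mem (by omega)⟩ := by
    apply Subtype.ext
    push_cast [cuspRing.coe_C]
    rw [hxu]
    ring
  rw [this]
  exact add_mem (Ideal.mul_mem_left _ _ hX) (Ideal.mul_mem_left _ _ hX')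

section Containment

variable {J : Ideal (cuspRing K)} {n : ℕ} {x : cuspRing K} {u : K⟦X⟧}

theorem Mgen_add_two_le_of_mem (hx : x ∈ J) (hxu : (x : K⟦X⟧) = X ^ n * u)
    (hu : constantCoeff u ≠ 0) : Mgen K (n + 2) ≤ J := by
  intro y hy
  obtain ⟨v, hyv⟩ := (mem_Mgen_iff (by omega)).mp hy
  have : y = ⟨X ^ 2 * (v * u⁻¹), cuspRing.X_pow_mul_mem le_rfl _⟩ * x := by
    apply Subtype.ext
    push_cast
    rw [hyv, hxu, pow_add, mul_assoc, mul_mul_mul_comm, mul_assoc v,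
      PowerSeries.inv_mul_cancel _ hu]
    ring
  rw [this]
  exact J.mul_mem_left _ hx

theorem mem_of_mem_of_coeff_eq (hM : Mgen K (n + 2) ≤ J) (hx : x ∈ J)
    (hxu : (x : K⟦X⟧) = X ^ n * u) {y : cuspRing K} {v : K⟦X⟧} (hyv : (y : K⟦X⟧) = X ^ n * v)
    (h0 : constantCoeff v = constantCoeff u) (h1 : coeff 1 v = coeff 1 u) : y ∈ J := by
  have hdiff : y - x ∈ Mgen K (n + 2) := by
    rw [mem_Mgen_iff (by omega), pow_add]
    push_cast
    rw [hyv, hxu, ← mul_sub]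
    refine mul_dvd_mul_left _ (X_pow_dvd_iff.mpr fun m hm => ?_)
    interval_cases m
    · simp [h0]
    · simp [h1]
  simpa using J.add_mem (hM hdiff) hx

theorem Pgen_le_of_mem (hn : 2 ≤ n) {a : K} (hx : x ∈ J) (hxu : (x : K⟦X⟧) = X ^ n * u)
    (hu0 : constantCoeff u ≠ 0) (hu1 : coeff 1 u = a * constantCoeff u) : Pgen K n a ≤ J := by
  intro y hy
  obtain ⟨v, hyv, hv⟩ := (mem_Pgen_iff hn).mp hy
  set α := constantCoeff v / constantCoeff u
  refine mem_of_mem_of_coeff_eq (Mgen_add_two_le_of_mem hx hxu hu0)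
    (J.mul_mem_left (cuspRing.C α) hx) (u := PowerSeries.C α * u) ?_ hyv ?_ ?_
  · push_cast [cuspRing.coe_C]; rw [hxu]; ring
  · simp [α, hu0]
  · simp only [hv, coeff_C_mul, hu1, α]
    field_simp

theorem Mgen_le_of_mem (hn : 2 ≤ n) {x' : cuspRing K} {u' : K⟦X⟧} (hx : x ∈ J) (hx' : x' ∈ J)
    (hxu : (x : K⟦X⟧) = X ^ n * u) (hxu' : (x' : K⟦X⟧) = X ^ n * u')
    (hdet : constantCoeff u * coeff 1 u' ≠ coeff 1 u * constantCoeff u') : Mgen K n ≤ J := by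
  have hM : Mgen K (n + 2) ≤ J := by
    rcases ne_or_eq (constantCoeff u) 0 with hu | hu
    · exact Mgen_add_two_le_of_mem hx hxu hu
    · refine Mgen_add_two_le_of_mem hx' hxu' fun hu' => hdet ?_
      rw [hu, hu']; ring
  have hD : constantCoeff u * coeff 1 u' - coeff 1 u * constantCoeff u' ≠ 0 := sub_ne_zero.mpr hdet
  intro y hy
  obtain ⟨v, hyv⟩ := (mem_Mgen_iff hn).mp hy
  -- Cramer's rule: `α u + β u'` agrees with `v` in degrees `0` and `1`
  set α := (constantCoeff v * coeff 1 u' - coeff 1 v * constantCoeff u') /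
    (constantCoeff u * coeff 1 u' - coeff 1 u * constantCoeff u')
  set β := (constantCoeff u * coeff 1 v - coeff 1 u * constantCoeff v) /
    (constantCoeff u * coeff 1 u' - coeff 1 u * constantCoeff u')
  refine mem_of_mem_of_coeff_eq hM
    (J.add_mem (J.mul_mem_left (cuspRing.C α) hx) (J.mul_mem_left (cuspRing.C β) hx'))
    (u := PowerSeries.C α * u + PowerSeries.C β * u') ?_ hyv ?_ ?_
  · push_cast [cuspRing.coe_C]; rw [hxu, hxu']; ring
  · simp only [map_add, map_mul, constantCoeff_C, α, β]
    rw [div_mul_eq_mul_div, div_mul_eq_mul_div, ← add_div, eq_div_iff hD]; ring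
  · simp only [map_add, coeff_C_mul, α, β]
    rw [div_mul_eq_mul_div, div_mul_eq_mul_div, ← add_div, eq_div_iff hD]; ring

end Containment

theorem exists_order_of_ne_bot {J : Ideal (cuspRing K)} (hJ : J ≠ ⊥) :
    ∃ n, ∃ x ∈ J, coeff n (x : K⟦X⟧) ≠ 0 ∧ ∀ y ∈ J, X ^ n ∣ (y : K⟦X⟧) := by
  classical
  have hex : ∃ n, ∃ x ∈ J, coeff n (x : K⟦X⟧) ≠ 0 := by
    obtain ⟨x, hx, hx0⟩ := Submodule.exists_mem_ne_zero_of_ne_bot hJ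
    have hx0' : (x : K⟦X⟧) ≠ 0 := by exact_mod_cast hx0
    obtain ⟨n, hn⟩ := exists_coeff_ne_zero_iff_ne_zero.mpr hx0'
    exact ⟨n, x, hx, hn⟩
  refine ⟨Nat.find hex, (Nat.find_spec hex).imp fun x hx => ⟨hx.1, hx.2, fun y hy => ?_⟩⟩
  exact X_pow_dvd_iff.mpr fun m hm => not_not.mp fun h => Nat.find_min hex hm ⟨y, hy, h⟩

theorem eq_bot_or_top_or_Mgen_or_Pgen (J : Ideal (cuspRing K)) :
    J = ⊥ ∨ J = ⊤ ∨ ∃ n, 2 ≤ n ∧ (J = Mgen K n ∨ ∃ b, J = Pgen K n b) := by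
  rcases eq_or_ne J ⊥ with hJ | hJ
  · exact Or.inl hJ
  obtain ⟨n, x, hx, hxn, hdvd⟩ := exists_order_of_ne_bot hJ
  rcases eq_or_ne n 0 with rfl | hn0
  · exact Or.inr (Or.inl (cuspRing.eq_top_of_mem hx (by simpa using hxn)))
  have hn : 2 ≤ n := by
    have : n ≠ 1 := by rintro rfl; exact hxn x.2
    omega
  refine Or.inr (Or.inr ⟨n, hn, ?_⟩)
  obtain ⟨u, hxu⟩ := hdvd x hx
  have hu : constantCoeff u ≠ 0 := by simpa [hxu, coeff_X_pow_mul'] using hxn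
  set b := coeff 1 u / constantCoeff u
  have hPJ : Pgen K n b ≤ J := Pgen_le_of_mem hn hx hxu hu (by simp [b, hu])
  by_cases hJP : J ≤ Pgen K n b
  · exact Or.inr ⟨b, le_antisymm hJP hPJ⟩
  obtain ⟨y, hy, hyP⟩ := Set.not_subset.mp hJP
  obtain ⟨v, hyv⟩ := hdvd y hy
  refine Or.inl (le_antisymm (fun z hz => (mem_Mgen_iff hn).mpr (hdvd z hz))
    (Mgen_le_of_mem hn hx hy hxu hyv fun hdet => hyP ((mem_Pgen_iff hn).mpr ⟨v, hyv, ?_⟩)))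
  rw [div_mul_eq_mul_div, eq_div_iff hu]
  linear_combination hdet

section Order

variable {m n : ℕ} {a b : K}

theorem Pgen_le_Mgen (hn : 2 ≤ n) : Pgen K n a ≤ Mgen K n := fun x hx => by
  obtain ⟨u, hxu, -⟩ := (mem_Pgen_iff hn).mp hx
  exact (mem_Mgen_iff hn).mpr ⟨u, hxu⟩

theorem Mgen_antitone (hm : 2 ≤ m) (hmn : m ≤ n) : Mgen K n ≤ Mgen K m := fun _ hx =>
  (mem_Mgen_iff hm).mpr ((pow_dvd_pow X hmn).trans (X_pow_dvd_of_mem_Mgen hx))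

theorem Mgen_add_two_le_Pgen (hn : 2 ≤ n) : Mgen K (n + 2) ≤ Pgen K n a :=
  Mgen_add_two_le_of_mem (Pgen.gen_mem hn a) (Pgen.coe_gen hn a) (by simp)

theorem le_of_Pgen_le_Mgen (hn : 2 ≤ n) (hm : 2 ≤ m) (h : Pgen K n a ≤ Mgen K m) : m ≤ n :=
  le_of_X_pow_dvd_X_pow_mul ((mem_Mgen_iff hm).mp (h (Pgen.gen_mem hn a))) (by simp)

theorem Pgen_le_Pgen (hn : 2 ≤ n) (hm : 2 ≤ m) (h : Pgen K n a ≤ Pgen K m b) :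
    n = m ∧ a = b ∨ m + 2 ≤ n := by
  obtain ⟨k, rfl⟩ := Nat.exists_eq_add_of_le
    (le_of_Pgen_le_Mgen hn hm (h.trans (Pgen_le_Mgen hm)))
  obtain ⟨u, hu, hub⟩ := (mem_Pgen_iff hm).mp (h (Pgen.gen_mem hn a))
  rw [Pgen.coe_gen, pow_add, mul_assoc] at hu
  have hk := mul_left_cancel₀ (pow_ne_zero m X_ne_zero) hu
  subst hk
  rcases k with _ | _ | k
  · exact Or.inl ⟨rfl, by simpa [coeff_one] using hub⟩
  · simp at hub
  · exact Or.inr (by omega)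

theorem Mgen_ne_Pgen (hn : 2 ≤ n) (hm : 2 ≤ m) : Mgen K n ≠ Pgen K m b := fun h => by
  have hnm : n ≤ m := le_of_Pgen_le_Mgen hm hn h.ge
  rcases Pgen_le_Pgen (a := b + 1) hn hm (h ▸ Pgen_le_Mgen hn) with ⟨-, hb⟩ | hmn
  · simp at hb
  · omega

theorem Mgen_le_of_Pgen_lt {J : Ideal (cuspRing K)} (hn : 2 ≤ n) (h : Pgen K n a < J) :
    Mgen K n ≤ J := by
  rcases eq_bot_or_top_or_Mgen_or_Pgen J with rfl | rfl | ⟨m, hm, rfl | ⟨b, rfl⟩⟩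
  · exact absurd h not_lt_bot
  · exact le_top
  · exact Mgen_antitone hm (le_of_Pgen_le_Mgen hn hm h.le)
  · rcases Pgen_le_Pgen hn hm h.le with ⟨rfl, rfl⟩ | hmn
    · exact absurd h (lt_irrefl _)
    · exact (Mgen_antitone (by omega) hmn).trans (Mgen_add_two_le_Pgen hm)

end Order

section Products

variable {m n : ℕ}

theorem Mgen_mul_le (hnm : 2 ≤ n + m) : Mgen K n * Mgen K m ≤ Mgen K (n + m) :=
  Ideal.mul_le.mpr fun _ hx _ hy => (mem_Mgen_iff hnm).mpr <| by
    push_cast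
    rw [pow_add]
    exact mul_dvd_mul (X_pow_dvd_of_mem_Mgen hx) (X_pow_dvd_of_mem_Mgen hy)

theorem Pgen_mul_Pgen (hn : 2 ≤ n) (hm : 2 ≤ m) (a b : K) :
    Pgen K n a * Pgen K m b = Pgen K (n + m) (a + b) := by
  refine le_antisymm (Ideal.mul_le.mpr fun x hx y hy => ?_) ?_
  · obtain ⟨u, hxu, hu⟩ := (mem_Pgen_iff hn).mp hx
    obtain ⟨v, hyv, hv⟩ := (mem_Pgen_iff hm).mp hy
    refine (mem_Pgen_iff (by omega)).mpr ⟨u * v, ?_, ?_⟩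
    · push_cast; rw [hxu, hyv]; ring
    · rw [coeff_one_mul, map_mul, hu, hv]; ring
  · refine Pgen_le_of_mem (by omega) (Ideal.mul_mem_mul (Pgen.gen_mem hn a) (Pgen.gen_mem hm b))
      (u := (1 + PowerSeries.C a * X) * (1 + PowerSeries.C b * X)) ?_ (by simp) ?_
    · push_cast [Pgen.coe_gen]; ring
    · simp [coeff_one_mul, coeff_one]

theorem Mgen_le_of_Pgen_le {J : Ideal (cuspRing K)} {a a' : K} (hn : 2 ≤ n) (ha : a ≠ a')
    (h : Pgen K n a ≤ J) (h' : Pgen K n a' ≤ J) : Mgen K n ≤ J :=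
  Mgen_le_of_mem hn (h (Pgen.gen_mem hn a)) (h' (Pgen.gen_mem hn a')) (Pgen.coe_gen hn a)
    (Pgen.coe_gen hn a') (by simpa [coeff_one] using ha.symm)

theorem Pgen_mul_Mgen (hn : 2 ≤ n) (hm : 2 ≤ m) (a : K) :
    Pgen K n a * Mgen K m = Mgen K (n + m) := by
  refine le_antisymm ((Ideal.mul_mono_left (Pgen_le_Mgen hn)).trans (Mgen_mul_le (by omega))) ?_
  have h (b : K) : Pgen K (n + m) (a + b) ≤ Pgen K n a * Mgen K m :=
    Pgen_mul_Pgen hn hm a b ▸ Ideal.mul_mono_right (Pgen_le_Mgen hm)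
  simpa using Mgen_le_of_Pgen_le (by omega) (by simp) (h 0) (h 1)

end Products

def IsCollapsingOperation (Q : ℕ → K → Prop) (c : Ideal (cuspRing K) → Ideal (cuspRing K)) :
    Prop :=
  (∀ n a, Q n a → c (Pgen K n a) = Mgen K n) ∧
    ∀ I, (¬ ∃ n a, I = Pgen K n a ∧ Q n a) → c I = I

namespace IsCollapsingOperation

variable {Q : ℕ → K → Prop} {c : Ideal (cuspRing K) → Ideal (cuspRing K)}

theorem apply_eq_self_or (hc : IsCollapsingOperation Q c) (I : Ideal (cuspRing K)) :
    c I = I ∨ ∃ n a, Q n a ∧ I = Pgen K n a ∧ c I = Mgen K n := by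
  by_cases h : ∃ n a, I = Pgen K n a ∧ Q n a
  · obtain ⟨n, a, rfl, hna⟩ := h
    exact Or.inr ⟨n, a, hna, rfl, hc.1 n a hna⟩
  · exact Or.inl (hc.2 I h)

theorem apply_Mgen (hc : IsCollapsingOperation Q c) (hQ : ∀ n a, Q n a → 2 ≤ n) {n : ℕ}
    (hn : 2 ≤ n) : c (Mgen K n) = Mgen K n :=
  hc.2 _ fun ⟨m, b, h, hmb⟩ => Mgen_ne_Pgen hn (hQ m b hmb) h

theorem le_apply (hc : IsCollapsingOperation Q c) (hQ : ∀ n a, Q n a → 2 ≤ n)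
    (I : Ideal (cuspRing K)) : I ≤ c I := by
  rcases hc.apply_eq_self_or I with hI | ⟨n, a, hna, rfl, hI⟩
  · exact hI.ge
  · exact hI ▸ Pgen_le_Mgen (hQ n a hna)

theorem monotone (hc : IsCollapsingOperation Q c) (hQ : ∀ n a, Q n a → 2 ≤ n) :
    Monotone c := by
  intro I J hIJ
  rcases hc.apply_eq_self_or I with hI | ⟨n, a, hna, rfl, hI⟩
  · rw [hI]
    exact hIJ.trans (hc.le_apply hQ J)
  rcases hIJ.eq_or_lt with rfl | hlt
  · exact le_rfl
  · rw [hI]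
    exact (Mgen_le_of_Pgen_lt (hQ n a hna) hlt).trans (hc.le_apply hQ J)

theorem apply_apply (hc : IsCollapsingOperation Q c) (hQ : ∀ n a, Q n a → 2 ≤ n)
    (I : Ideal (cuspRing K)) : c (c I) = c I := by
  rcases hc.apply_eq_self_or I with hI | ⟨n, a, hna, -, hI⟩
  · rw [hI, hI]
  · rw [hI, hc.apply_Mgen hQ (hQ n a hna)]

theorem Mgen_mul_apply_le (hc : IsCollapsingOperation Q c) (hQ : ∀ n a, Q n a → 2 ≤ n)
    (hQ_add : ∀ n a m b, Q n a → 2 ≤ m → Q (n + m) b) {n : ℕ} {a : K} (hna : Q n a)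
    (J : Ideal (cuspRing K)) : Mgen K n * c J ≤ c (Pgen K n a * J) := by
  have hn := hQ n a hna
  rcases eq_bot_or_top_or_Mgen_or_Pgen J with rfl | rfl | ⟨m, hm, rfl | ⟨b, rfl⟩⟩
  · rw [Ideal.mul_bot]
    exact Ideal.mul_le_right
  · rw [Ideal.mul_top, hc.1 n a hna]
    exact Ideal.mul_le_left
  · rw [Pgen_mul_Mgen hn hm, hc.apply_Mgen hQ (n := n + m) (by omega), hc.apply_Mgen hQ hm]
    exact Mgen_mul_le (by omega)
  · rw [Pgen_mul_Pgen hn hm, hc.1 _ _ (hQ_add n a m _ hna hm)]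
    calc Mgen K n * c (Pgen K m b) ≤ Mgen K n * Mgen K m :=
          Ideal.mul_mono_right (hc.apply_Mgen hQ hm ▸ hc.monotone hQ (Pgen_le_Mgen hm))
      _ ≤ Mgen K (n + m) := Mgen_mul_le (by omega)

theorem isSemiprimeOperation (hc : IsCollapsingOperation Q c) (hQ : ∀ n a, Q n a → 2 ≤ n)
    (hQ_add : ∀ n a m b, Q n a → 2 ≤ m → Q (n + m) b) : IsSemiprimeOperation c := by
  refine ⟨⟨hc.le_apply hQ, fun _ _ => (hc.monotone hQ ·), hc.apply_apply hQ⟩, fun I J => ?_⟩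
  rcases hc.apply_eq_self_or I with hI | ⟨n, a, hna, rfl, hI⟩
  · rcases hc.apply_eq_self_or J with hJ | ⟨m, b, hmb, rfl, hJ⟩
    · rw [hI, hJ]
      exact hc.le_apply hQ _
    · rw [mul_comm, mul_comm I, hJ]
      exact hc.Mgen_mul_apply_le hQ hQ_add hmb I
  · rw [hI]
    exact hc.Mgen_mul_apply_le hQ hQ_add hna J

end IsCollapsingOperation

end

theorem cusp_int_semiprime_general {K : Type*} [Field K] (i : ℕ) (hi : 2 ≤ i)
    (S T : Set K)
    (c : Ideal (cuspRing K) → Ideal (cuspRing K))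
    (h1 : ∀ (n : ℕ) (a : K),
      (i + 2 ≤ n ∨ (n = i ∧ a ∈ S) ∨ (n = i + 1 ∧ a ∈ T)) → c (Pgen K n a) = Mgen K n)
    (h2 : ∀ I : Ideal (cuspRing K),
      (¬ ∃ (n : ℕ) (a : K), I = Pgen K n a ∧
        (i + 2 ≤ n ∨ (n = i ∧ a ∈ S) ∨ (n = i + 1 ∧ a ∈ T))) → c I = I) :
    IsSemiprimeOperation c := by
  refine IsCollapsingOperation.isSemiprimeOperation
    (Q := fun n a => i + 2 ≤ n ∨ (n = i ∧ a ∈ S) ∨ (n = i + 1 ∧ a ∈ T)) ⟨h1, h2⟩ ?_ ?_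
  · rintro n a (h | ⟨rfl, -⟩ | ⟨rfl, -⟩) <;> omega
  · rintro n a m b (h | ⟨rfl, -⟩ | ⟨rfl, -⟩) hm <;> exact Or.inl (by omega)

theorem cusp_int_semiprime {K : Type*} [Field K] (i : ℕ) (hi : 2 ≤ i)
    (S T : Set K) (hS : S.Nonempty)
    (c : Ideal (cuspRing K) → Ideal (cuspRing K))
    (h1 : ∀ (n : ℕ) (a : K),
      (i + 2 ≤ n ∨ (n = i ∧ a ∈ S) ∨ (n = i + 1 ∧ a ∈ T)) → c (Pgen K n a) = Mgen K n)
    (h2 : ∀ I : Ideal (cuspRing K),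
      (¬ ∃ (n : ℕ) (a : K), I = Pgen K n a ∧
        (i + 2 ≤ n ∨ (n = i ∧ a ∈ S) ∨ (n = i + 1 ∧ a ∈ T))) → c I = I) :
    IsSemiprimeOperation c :=
  cusp_int_semiprime_general i hi S T c h1 h2
end

section
/- Let K be a field, R = K[[t^2, t^3]], and let c be a semiprime operation on R. If c(M_{j+2}) = M_j for some integer j ≥ 2, then c(I) = M_j for every nonzero ideal I ⊆ M_j; in particular c is a bounded semiprime operation. -/
open PowerSeries

/-!
Put `x = t ^ 2`, so that `x M_n = M_(n+2)` for `n ≥ 2`. The hypothesis reads `c (x M_j) = M_j`,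
whence `c M_j = M_j` by idempotence, and semiprimality `x c(J) ⊆ c(x J)` propagates this to
`M_j ⊆ c (x ^ k M_j)` for every `k`. A nonzero `f` of order `m` divides in `K[[t^2, t^3]]` every
series divisible by `t ^ (m + 2)`, so a nonzero ideal `I` contains `x ^ k M_j = M_(j+2k)` for
large `k`; for `I ⊆ M_j` this squeezes `c I` between `M_j` and `c M_j = M_j`.
-/

open Ideal

section SemiprimeOperation

variable {R : Type*} [CommRing R] {c : Ideal R → Ideal R}

theorem IsSemiprimeOperation.span_singleton_mul_le (hc : IsSemiprimeOperation c) (x : R)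
    (I : Ideal R) : span {x} * c I ≤ c (span {x} * I) :=
  (mul_mono_left (hc.1.1 _)).trans (hc.2 _ _)

theorem IsSemiprimeOperation.eq_of_span_pow_mul_le (hc : IsSemiprimeOperation c) {x : R}
    {N I : Ideal R} (hN : c (span {x} * N) = N) (k : ℕ) (hlow : span {x} ^ k * N ≤ I)
    (hup : I ≤ N) : c I = N := by
  have c_mono := hc.1.2.1
  have c_idem := hc.1.2.2
  have hcN : c N = N := by rw [← hN, c_idem]
  have le_c_pow (k : ℕ) : N ≤ c (span {x} ^ k * N) := by
    induction k with
    | zero => simp [hcN]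
    | succ k ih =>
      calc N = c (span {x} * N) := hN.symm
        _ ≤ c (c (span {x} * (span {x} ^ k * N))) :=
          c_mono _ _ ((mul_mono_right ih).trans (hc.span_singleton_mul_le x _))
        _ = c (span {x} ^ (k + 1) * N) := by rw [c_idem, pow_succ', mul_assoc]
  exact le_antisymm (hcN ▸ c_mono _ _ hup) ((le_c_pow k).trans (c_mono _ _ hlow))

end SemiprimeOperation

namespace cuspRing

variable {K : Type*} [Field K]

theorem mem_of_X_sq_dvd {f : K⟦X⟧} (h : X ^ 2 ∣ f) : f ∈ cuspRing K :=
  X_pow_dvd_iff.mp h 1 one_lt_two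

noncomputable def tPow (K : Type*) [Field K] (n : ℕ) (hn : 2 ≤ n) : cuspRing K :=
  ⟨X ^ n, mem_of_X_sq_dvd (pow_dvd_pow X hn)⟩

@[simp]
theorem coe_tPow (n : ℕ) (hn : 2 ≤ n) : (tPow K n hn : K⟦X⟧) = X ^ n := rfl

theorem dvd_of_X_pow_dvd {f g : cuspRing K} (hf : f ≠ 0)
    (hg : X ^ ((f : K⟦X⟧).order.toNat + 2) ∣ (g : K⟦X⟧)) : f ∣ g := by
  have hf' : (f : K⟦X⟧) ≠ 0 := by simpa using hf
  obtain ⟨u, hu⟩ := isUnit_divided_by_X_pow_order hf'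
  have hfu : (f : K⟦X⟧) = X ^ (f : K⟦X⟧).order.toNat * (u : K⟦X⟧) := by
    rw [hu, X_pow_order_mul_divXPowOrder]
  obtain ⟨h, hh⟩ := hg
  refine ⟨⟨X ^ 2 * (h * (↑u⁻¹ : K⟦X⟧)), mem_of_X_sq_dvd (dvd_mul_right _ _)⟩, Subtype.ext ?_⟩
  show (g : K⟦X⟧) = (f : K⟦X⟧) * (X ^ 2 * (h * (↑u⁻¹ : K⟦X⟧)))
  linear_combination hh - X ^ 2 * (h * (↑u⁻¹ : K⟦X⟧)) * hfu -
    X ^ ((f : K⟦X⟧).order.toNat + 2) * h * u.mul_inv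

end cuspRing

section Mgen

variable {K : Type*} [Field K] {n : ℕ}

open cuspRing

theorem Mgen_eq_span_tPow (hn : 2 ≤ n) :
    Mgen K n = span {tPow K n hn, tPow K (n + 1) (hn.trans n.le_succ)} := by
  unfold Mgen
  congr 1
  ext x
  simp [Subtype.ext_iff]

theorem span_tPow_two_mul_Mgen (hn : 2 ≤ n) :
    span {tPow K 2 le_rfl} * Mgen K n = Mgen K (n + 2) := by
  rw [Mgen_eq_span_tPow hn, Mgen_eq_span_tPow (by omega : 2 ≤ n + 2), span_insert, Ideal.mul_sup,
    span_singleton_mul_span_singleton, span_singleton_mul_span_singleton, ← span_insert]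
  congr 3 <;> apply Subtype.ext <;> simp only [Subring.coe_mul, coe_tPow] <;> ring

theorem span_tPow_two_pow_mul_Mgen (hn : 2 ≤ n) (k : ℕ) :
    span {tPow K 2 le_rfl} ^ k * Mgen K n = Mgen K (n + 2 * k) := by
  induction k with
  | zero => simp
  | succ k ih =>
    rw [pow_succ', mul_assoc, ih, span_tPow_two_mul_Mgen (by omega), mul_add_one, add_assoc]

theorem exists_Mgen_le_of_ne_bot {I : Ideal (cuspRing K)} (hI : I ≠ ⊥) :
    ∃ m, ∀ n, m ≤ n → Mgen K n ≤ I := by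
  obtain ⟨f, hfI, hf⟩ := Submodule.exists_mem_ne_zero_of_ne_bot hI
  refine ⟨(f : K⟦X⟧).order.toNat + 2, fun n hn => span_le.mpr ?_⟩
  rintro x (hx | hx) <;>
    exact I.mem_of_dvd (dvd_of_X_pow_dvd hf (hx ▸ pow_dvd_pow X (by omega))) hfI

theorem Mgen_ne_bot (hn : 2 ≤ n) : Mgen K n ≠ ⊥ :=
  (Submodule.ne_bot_iff _).mpr ⟨tPow K n hn, subset_span (Or.inl rfl),
    fun h => pow_ne_zero n X_ne_zero (congrArg Subtype.val h)⟩

theorem Mgen_ne_top (hn : n ≠ 0) : Mgen K n ≠ ⊤ := by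
  refine ne_top_of_le_ne_top (RingHom.ker_ne_top (constantCoeff.comp (cuspRing K).subtype))
    (span_le.mpr ?_)
  rintro x (hx | hx) <;> simp [RingHom.mem_ker, hx, hn]

end Mgen

theorem cusp_bounded_of_Mj_eq_closure_Mj2 {K : Type*} [Field K]
    (c : Ideal (cuspRing K) → Ideal (cuspRing K)) (hc : IsSemiprimeOperation c)
    (j : ℕ) (hj : 2 ≤ j) (h : c (Mgen K (j + 2)) = Mgen K j) :
    (∀ I : Ideal (cuspRing K), I ≠ ⊥ → I ≤ Mgen K j → c I = Mgen K j) ∧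
      IsBoundedOperation c := by
  have hM : c (span {cuspRing.tPow K 2 le_rfl} * Mgen K j) = Mgen K j := by
    rwa [span_tPow_two_mul_Mgen hj]
  have hbounded (I : Ideal (cuspRing K)) (hI : I ≠ ⊥) (hIM : I ≤ Mgen K j) : c I = Mgen K j := by
    obtain ⟨m, hm⟩ := exists_Mgen_le_of_ne_bot hI
    refine hc.eq_of_span_pow_mul_le hM m ?_ hIM
    rw [span_tPow_two_pow_mul_Mgen hj]
    exact hm _ (by omega)
  exact ⟨hbounded, Mgen K j, Mgen_ne_bot hj, Mgen_ne_top (by omega), hbounded⟩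
end
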